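/- If every node of the graph has a self-loop with positive weight (A_ii > 0 for all i), then -1 is not an eigenvalue of A_sym = D^{-1/2} A D^{-1/2}; equivalently, for every unit vector u, u^T (I + A_sym) u > 0. -/
import Mathlib


open scoped Matrix

/-- If every node has a positive self-loop (`A i i > 0`), then `-1` is not an
eigenvalue of `A_sym`: for every unit vector `u`, `uᵀ (I + A_sym) u > 0`. -/
theorem self_loops_exclude_neg_one (n : ℕ) (A : Matrix (Fin n) (Fin n) ℝ)
    (hsymm : A.IsSymm) (hnonneg : ∀ i j, 0 ≤ A i j) (hloop : ∀ i, 0 < A i i)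
    (d : Fin n → ℝ) (hd : ∀ i, d i = ∑ j, A i j)
    (Asym : Matrix (Fin n) (Fin n) ℝ)
    (hAsym : ∀ i j, Asym i j = A i j / (Real.sqrt (d i) * Real.sqrt (d j)))
    (u : Fin n → ℝ) (hu : ∑ i, (u i)^2 = 1) :
    0 < u ⬝ᵥ ((1 + Asym).mulVec u) := by
  have hdpos : ∀ i, 0 < d i := by
    intro i
    rw [hd]
    exact lt_of_lt_of_le (hloop i)
      (Finset.single_le_sum (fun j _ => hnonneg i j) (Finset.mem_univ i))
  set f : Fin n → ℝ := fun i => u i / Real.sqrt (d i) with hf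
  have hs : ∀ i, 0 < Real.sqrt (d i) := fun i => Real.sqrt_pos.2 (hdpos i)
  have hsq : ∀ i, Real.sqrt (d i) * Real.sqrt (d i) = d i :=
    fun i => Real.mul_self_sqrt (hdpos i).le
  -- cross term identity
  have hcross : ∀ i j, A i j * f i * f j = Asym i j * u i * u j := by
    intro i j
    rw [hAsym, hf]
    field_simp
  have hfsq : ∀ i, d i * f i ^ 2 = u i ^ 2 := by
    intro i
    rw [hf, div_pow, Real.sq_sqrt (hdpos i).le, mul_div_cancel₀ _ (hdpos i).ne']
  have key : u ⬝ᵥ ((1 + Asym).mulVec u)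
      = (1/2) * ∑ i, ∑ j, A i j * (f i + f j)^2 := by
    have hS1 : ∑ i, ∑ j, A i j * f i ^ 2 = 1 := by
      calc ∑ i, ∑ j, A i j * f i ^ 2 = ∑ i, d i * f i ^ 2 := by
            refine Finset.sum_congr rfl fun i _ => ?_
            rw [← Finset.sum_mul, ← hd]
        _ = ∑ i, u i ^ 2 := Finset.sum_congr rfl fun i _ => hfsq i
        _ = 1 := hu
    have hS3 : ∑ i, ∑ j, A i j * f j ^ 2 = 1 := by
      rw [Finset.sum_comm]
      rw [← hS1]
      refine Finset.sum_congr rfl fun i _ => Finset.sum_congr rfl fun j _ => ?_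
      rw [show A j i = A i j from by rw [← hsymm.apply]]
    have hL : u ⬝ᵥ ((1 + Asym).mulVec u)
        = 1 + ∑ i, ∑ j, Asym i j * u i * u j := by
      rw [Matrix.add_mulVec, Matrix.one_mulVec, dotProduct_add]
      congr 1
      · rw [← hu, dotProduct]
        exact Finset.sum_congr rfl fun i _ => (sq (u i)).symm
      · rw [dotProduct]
        refine Finset.sum_congr rfl fun i _ => ?_
        rw [Matrix.mulVec, dotProduct, Finset.mul_sum]
        exact Finset.sum_congr rfl fun j _ => by ring
    rw [hL]
    have hexp : ∀ i j, A i j * (f i + f j)^2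
        = A i j * f i ^ 2 + 2 * (A i j * f i * f j) + A i j * f j ^ 2 :=
      fun i j => by ring
    calc 1 + ∑ i, ∑ j, Asym i j * u i * u j
        = 1 + ∑ i, ∑ j, A i j * f i * f j := by
          rw [Finset.sum_congr rfl fun i _ => Finset.sum_congr rfl fun j _ => (hcross i j).symm]
      _ = (1/2) * ((∑ i, ∑ j, A i j * f i ^ 2)
            + 2 * (∑ i, ∑ j, A i j * f i * f j)
            + (∑ i, ∑ j, A i j * f j ^ 2)) := by
          rw [hS1, hS3]; ring
      _ = (1/2) * ∑ i, ∑ j, A i j * (f i + f j)^2 := by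
          congr 1
          simp_rw [hexp, Finset.sum_add_distrib, Finset.mul_sum]
  rw [key]
  have : ∃ i0, u i0 ≠ 0 := by
    by_contra h
    push_neg at h
    simp [h] at hu
  obtain ⟨i0, hi0⟩ := this
  have hfi0 : f i0 ≠ 0 := by
    rw [hf]
    exact div_ne_zero hi0 (hs i0).ne'
  have hpos : 0 < ∑ i, ∑ j, A i j * (f i + f j)^2 := by
    refine Finset.sum_pos'
      (fun i _ => Finset.sum_nonneg fun j _ => mul_nonneg (hnonneg i j) (sq_nonneg _))
      ⟨i0, Finset.mem_univ i0, ?_⟩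
    refine Finset.sum_pos' (fun j _ => mul_nonneg (hnonneg i0 j) (sq_nonneg _))
      ⟨i0, Finset.mem_univ i0, ?_⟩
    have hne : f i0 + f i0 ≠ 0 := by
      intro h
      apply hfi0
      linarith [h]
    exact mul_pos (hloop i0) (pow_two_pos_of_ne_zero hne)
  linarith
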